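/- Let p ≥ 2, n ≥ 1 and k ≥ 1 be integers and assume the composite-objective setting: ρ_λ satisfies Assumption 1 with parameters λ > 0, L > 0, μ ≥ 0; L_n is differentiable and satisfies the RSC2 conditions with constants α₁, α₂ > 0 and τ₁, τ₂ ≥ 0; set α := min{α₁, α₂}. Let β* ∈ C with ‖β*‖₂ ≤ 1 and ‖β*‖₀ ≤ k, and suppose μ < 2α, λL ≥ 8‖∇L_n(β*)‖_∞, λL ≥ 16Rτ₁(log p)/n, λL ≥ 4τ₂√((log p)/n), and (2R/α₂)·(3λL/8 + τ₂√((log p)/n)) < 3. Let β̂ be a global minimizer of φ over C, let η̄ ≥ 0, and let β ∈ C satisfy φ(β) ≤ φ(β̂) + η̄. Then ‖β − β̂‖₁ ≤ 8√k·‖β − β̂‖₂ + 16√k·‖β̂ − β*‖₂ + 2·min{2η̄/(λL), R}. -/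

import Mathlib

open Finset

noncomputable def l1 {p : ℕ} (x : Fin p → ℝ) : ℝ := ∑ i, |x i|

noncomputable def l2 {p : ℕ} (x : Fin p → ℝ) : ℝ := Real.sqrt (∑ i, (x i) ^ 2)

noncomputable def linf {p : ℕ} (x : Fin p → ℝ) : ℝ := ⨆ i, |x i|

noncomputable def l0 {p : ℕ} (x : Fin p → ℝ) : ℕ :=
  (Finset.univ.filter (fun i => x i ≠ 0)).card

noncomputable def dot {p : ℕ} (x y : Fin p → ℝ) : ℝ := ∑ i, x i * y i

noncomputable def rhoVec {p : ℕ} (ρ : ℝ → ℝ) (x : Fin p → ℝ) : ℝ := ∑ i, ρ (x i)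

/-- Assumption 1 on the regularizer `ρ_λ` with parameters `λ, L, μ`. -/
structure Assumption1 (ρ : ℝ → ℝ) (lam L mu : ℝ) : Prop where
  zero : ρ 0 = 0
  even : ∀ t : ℝ, ρ (-t) = ρ t
  mono : ∀ s t : ℝ, 0 ≤ s → s ≤ t → ρ s ≤ ρ t
  slope : ∀ s t : ℝ, 0 < s → s ≤ t → ρ t / t ≤ ρ s / s
  diff : ∀ t : ℝ, t ≠ 0 → DifferentiableAt ℝ ρ t
  deriv_lim : Filter.Tendsto (deriv ρ) (nhdsWithin 0 (Set.Ioi 0)) (nhds (lam * L))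
  conv : ConvexOn ℝ Set.univ (fun t => ρ t + (mu / 2) * t ^ 2)

/-- Taylor error `T(β₁, β₂) = L_n(β₁) − L_n(β₂) − ⟨∇L_n(β₂), β₁ − β₂⟩`. -/
noncomputable def taylorErr {p : ℕ} (Ln : (Fin p → ℝ) → ℝ)
    (gradLn : (Fin p → ℝ) → (Fin p → ℝ)) (b1 b2 : Fin p → ℝ) : ℝ :=
  Ln b1 - Ln b2 - dot (gradLn b2) (b1 - b2)

/-- The RSC conditions used for the optimization theory (over the feasible region). -/
def RSC2 {p : ℕ} (n : ℕ) (Ln : (Fin p → ℝ) → ℝ)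
    (gradLn : (Fin p → ℝ) → (Fin p → ℝ)) (R a1 a2 t1 t2 : ℝ) : Prop :=
  ∀ b2 : Fin p → ℝ, l2 b2 ≤ 3 → l1 b2 ≤ R → ∀ b1 : Fin p → ℝ, l1 b1 ≤ R →
    (l2 (b1 - b2) ≤ 3 →
      taylorErr Ln gradLn b1 b2 ≥
        a1 * (l2 (b1 - b2)) ^ 2 - t1 * (Real.log p / n) * (l1 (b1 - b2)) ^ 2) ∧
    (3 ≤ l2 (b1 - b2) →
      taylorErr Ln gradLn b1 b2 ≥
        a2 * l2 (b1 - b2) - t2 * Real.sqrt (Real.log p / n) * l1 (b1 - b2))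

/-- The restricted smoothness (RSM) condition. -/
def RSM {p : ℕ} (n : ℕ) (Ln : (Fin p → ℝ) → ℝ)
    (gradLn : (Fin p → ℝ) → (Fin p → ℝ)) (a3 t3 : ℝ) : Prop :=
  ∀ b1 b2 : Fin p → ℝ,
    taylorErr Ln gradLn b1 b2 ≤
      a3 * (l2 (b1 - b2)) ^ 2 + t3 * (Real.log p / n) * (l1 (b1 - b2)) ^ 2

/-- Side function `g_{λ,μ}(β) = λ⁻¹ (ρ_λ(β) + (μ/2)‖β‖₂²)`. -/
noncomputable def gside {p : ℕ} (ρ : ℝ → ℝ) (lam mu : ℝ) (β : Fin p → ℝ) : ℝ :=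
  lam⁻¹ * (rhoVec ρ β + (mu / 2) * (l2 β) ^ 2)

/-- Composite objective `φ(β) = L_n(β) + ρ_λ(β)`. -/
noncomputable def phiObj {p : ℕ} (Ln : (Fin p → ℝ) → ℝ) (ρ : ℝ → ℝ)
    (β : Fin p → ℝ) : ℝ :=
  Ln β + rhoVec ρ β

/-- Composite gradient descent iterates with stepsize `1/η` on the feasible set
`C = {β : g_{λ,μ}(β) ≤ R}`, for the modified loss `L̄_n(β) = L_n(β) − (μ/2)‖β‖₂²`
(whose gradient is `∇L_n(β) − μβ`). -/
def CompIter {p : ℕ} (ρ : ℝ → ℝ) (lam mu eta R : ℝ)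
    (gradLn : (Fin p → ℝ) → (Fin p → ℝ)) (βs : ℕ → Fin p → ℝ) : Prop :=
  (∀ t : ℕ, gside ρ lam mu (βs t) ≤ R) ∧
  ∀ t : ℕ, ∀ γ : Fin p → ℝ, gside ρ lam mu γ ≤ R →
    (1 / 2) * (l2 (βs (t + 1) - (βs t - eta⁻¹ • (gradLn (βs t) - mu • βs t)))) ^ 2 +
        (lam / eta) * gside ρ lam mu (βs (t + 1)) ≤
      (1 / 2) * (l2 (γ - (βs t - eta⁻¹ • (gradLn (βs t) - mu • βs t)))) ^ 2 +
        (lam / eta) * gside ρ lam mu γ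

/-!
Compare both `β` and `β̂` with `β*`: each is feasible with `φ(w) ≤ φ(β*) + e`. For `ν = w - β*`,
the gradient term is at most `λL/8 · ‖ν‖₁`, and since `λL|t| - (μ/2)t² ≤ ρ_λ(t) ≤ λL|t|` with
`ρ_λ` subadditive, `ρ_λ(β*) - ρ_λ(w) ≤ λL(‖ν_S‖₁ - ‖ν_{Sᶜ}‖₁) + (μ/2)‖ν‖₂²` on the support `S`
of `β*`. If `‖ν‖₂ ≤ 3`, the quadratic RSC branch with `μ/2 < α₁` turns this into the cone bound
`‖ν‖₁ ≤ (8/3)√k‖ν‖₂ + (4/3)e/(λL)`. If `‖ν‖₂ ≥ 3`, the linear RSC branch and the size condition on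
`R` force `R < 2√k + 2e/(λL)`, and then the trivial bound `‖β - β̂‖₁ ≤ 2R` suffices. The triangle
inequality combines the cases.
-/

open Filter Topology

namespace Assumption1

variable {ρ : ℝ → ℝ} {lam L mu : ℝ}

theorem apply_abs (h : Assumption1 ρ lam L mu) (t : ℝ) : ρ |t| = ρ t := by
  rcases abs_choice t with ht | ht <;> simp [ht, h.even]

theorem nonneg (h : Assumption1 ρ lam L mu) (t : ℝ) : 0 ≤ ρ t := by
  simpa [h.zero, h.apply_abs] using h.mono 0 |t| le_rfl (abs_nonneg t)

theorem continuous (h : Assumption1 ρ lam L mu) : Continuous ρ := by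
  have hconv : Continuous fun t => ρ t + mu / 2 * t ^ 2 :=
    continuousOn_univ.mp (h.conv.continuousOn isOpen_univ)
  exact (hconv.sub (by fun_prop : Continuous fun t : ℝ => mu / 2 * t ^ 2)).congr fun t => by simp

theorem tendsto_div (h : Assumption1 ρ lam L mu) :
    Tendsto (fun s => ρ s / s) (𝓝[>] 0) (𝓝 (lam * L)) := by
  refine deriv.lhopital_zero_nhdsGT ?_ ?_ ?_ ?_ ?_
  · filter_upwards [self_mem_nhdsWithin] with s hs using h.diff s (ne_of_gt hs)
  · simp
  · exact (h.continuous.tendsto' 0 0 h.zero).mono_left nhdsWithin_le_nhds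
  · exact tendsto_nhdsWithin_of_tendsto_nhds tendsto_id
  · simpa using h.deriv_lim

theorem le_mul_of_nonneg (h : Assumption1 ρ lam L mu) {t : ℝ} (ht : 0 ≤ t) :
    ρ t ≤ lam * L * t := by
  rcases ht.eq_or_lt with rfl | ht
  · simp [h.zero]
  have hslope : ρ t / t ≤ lam * L := ge_of_tendsto h.tendsto_div <| by
    filter_upwards [Ioo_mem_nhdsGT ht] with s hs using h.slope s t hs.1 hs.2.le
  rwa [div_le_iff₀ ht] at hslope

theorem mul_sub_le_of_nonneg (h : Assumption1 ρ lam L mu) {t : ℝ} (ht : 0 ≤ t) :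
    lam * L * t - mu / 2 * t ^ 2 ≤ ρ t := by
  rcases ht.eq_or_lt with rfl | ht
  · simp [h.zero]
  have hlim : Tendsto (fun s => ρ s / s + mu / 2 * s) (𝓝[>] 0) (𝓝 (lam * L)) := by
    have hlin : Tendsto (fun s : ℝ => mu / 2 * s) (𝓝[>] 0) (𝓝 0) :=
      ((by fun_prop : Continuous fun s : ℝ => mu / 2 * s).tendsto' 0 0 (by simp)).mono_left
        nhdsWithin_le_nhds
    simpa using h.tendsto_div.add hlin
  have hslope : lam * L ≤ (ρ t + mu / 2 * t ^ 2) / t := le_of_tendsto hlim <| by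
    filter_upwards [Ioo_mem_nhdsGT ht] with s hs
    have hsec := h.conv.secant_mono (a := 0) trivial trivial trivial hs.1.ne' ht.ne' hs.2.le
    calc ρ s / s + mu / 2 * s = (ρ s + mu / 2 * s ^ 2) / s := by field_simp
      _ ≤ (ρ t + mu / 2 * t ^ 2) / t := by simpa [h.zero] using hsec
  rw [le_div_iff₀ ht] at hslope
  linarith

theorem le_mul_abs (h : Assumption1 ρ lam L mu) (t : ℝ) : ρ t ≤ lam * L * |t| :=
  h.apply_abs t ▸ h.le_mul_of_nonneg (abs_nonneg t)

theorem mul_abs_sub_le (h : Assumption1 ρ lam L mu) (t : ℝ) :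
    lam * L * |t| - mu / 2 * t ^ 2 ≤ ρ t := by
  simpa [h.apply_abs] using h.mul_sub_le_of_nonneg (abs_nonneg t)

theorem add_le_of_nonneg (h : Assumption1 ρ lam L mu) {u v : ℝ} (hu : 0 ≤ u) (hv : 0 ≤ v) :
    ρ (u + v) ≤ ρ u + ρ v := by
  rcases hu.eq_or_lt with rfl | hu
  · simp [h.zero]
  rcases hv.eq_or_lt with rfl | hv
  · simp [h.zero]
  have huv : 0 < u + v := add_pos hu hv
  have hu' : ρ (u + v) / (u + v) ≤ ρ u / u := h.slope u (u + v) hu (by linarith)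
  have hv' : ρ (u + v) / (u + v) ≤ ρ v / v := h.slope v (u + v) hv (by linarith)
  calc ρ (u + v) = u * (ρ (u + v) / (u + v)) + v * (ρ (u + v) / (u + v)) := by
        field_simp
    _ ≤ u * (ρ u / u) + v * (ρ v / v) := by gcongr
    _ = ρ u + ρ v := by field_simp

theorem add_le (h : Assumption1 ρ lam L mu) (a b : ℝ) : ρ (a + b) ≤ ρ a + ρ b :=
  calc ρ (a + b) = ρ |a + b| := (h.apply_abs _).symm
    _ ≤ ρ (|a| + |b|) := h.mono _ _ (abs_nonneg _) (abs_add_le a b)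
    _ ≤ ρ |a| + ρ |b| := h.add_le_of_nonneg (abs_nonneg a) (abs_nonneg b)
    _ = ρ a + ρ b := by rw [h.apply_abs, h.apply_abs]

theorem sub_le_mul_abs_sub (h : Assumption1 ρ lam L mu) (a b : ℝ) :
    ρ a - ρ b ≤ lam * L * |a - b| := by
  have hadd := h.add_le b (a - b)
  rw [add_sub_cancel] at hadd
  linarith [h.le_mul_abs (a - b)]

end Assumption1

section Norms

variable {p : ℕ}

theorem l1_nonneg (x : Fin p → ℝ) : 0 ≤ l1 x :=
  sum_nonneg fun _ _ => abs_nonneg _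

theorem l2_nonneg (x : Fin p → ℝ) : 0 ≤ l2 x := Real.sqrt_nonneg _

theorem l2_sq (x : Fin p → ℝ) : l2 x ^ 2 = ∑ i, x i ^ 2 :=
  Real.sq_sqrt (sum_nonneg fun _ _ => sq_nonneg _)

theorem l2_eq_norm (x : Fin p → ℝ) : l2 x = ‖(WithLp.toLp 2 x : EuclideanSpace ℝ (Fin p))‖ := by
  simp [l2, EuclideanSpace.norm_eq]

theorem l2_add_le (x y : Fin p → ℝ) : l2 (x + y) ≤ l2 x + l2 y := by
  simpa only [l2_eq_norm, WithLp.toLp_add] using norm_add_le _ _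

theorem l1_sub_le (x y : Fin p → ℝ) : l1 (x - y) ≤ l1 x + l1 y := by
  rw [l1, l1, l1, ← sum_add_distrib]
  exact sum_le_sum fun i _ => abs_sub (x i) (y i)

theorem sum_abs_le_sqrt_card_mul_l2 (A : Finset (Fin p)) (x : Fin p → ℝ) :
    ∑ i ∈ A, |x i| ≤ √(#A) * l2 x := by
  have hcs : (∑ i ∈ A, |x i|) ^ 2 ≤ #A * ∑ i ∈ A, x i ^ 2 := by
    simpa only [sq_abs] using sq_sum_le_card_mul_sum_sq (s := A) (f := fun i => |x i|)
  have hsub : ∑ i ∈ A, x i ^ 2 ≤ l2 x ^ 2 := by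
    rw [l2_sq]
    exact sum_le_sum_of_subset_of_nonneg A.subset_univ fun i _ _ => sq_nonneg _
  rw [← Real.sqrt_sq (l2_nonneg x), ← Real.sqrt_mul (Nat.cast_nonneg _)]
  exact (Real.le_sqrt (sum_nonneg fun _ _ => abs_nonneg _) (by positivity)).mpr
    (hcs.trans (by gcongr))

theorem l1_le_sqrt_mul_l2 {k : ℕ} {x : Fin p → ℝ} (hx : l0 x ≤ k) : l1 x ≤ √k * l2 x := by
  calc l1 x = ∑ i ∈ univ.filter (fun i => x i ≠ 0), |x i| :=
        (sum_filter_of_ne fun i _ hi => abs_ne_zero.mp hi).symm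
    _ ≤ √(l0 x) * l2 x := sum_abs_le_sqrt_card_mul_l2 _ x
    _ ≤ √k * l2 x := by gcongr; exact l2_nonneg x

theorem abs_dot_le (x y : Fin p → ℝ) : |dot x y| ≤ linf x * l1 y := by
  have habs (i : Fin p) : |x i| ≤ linf x :=
    le_ciSup (f := fun j => |x j|) (Set.finite_range _).bddAbove i
  calc |dot x y| ≤ ∑ i, |x i| * |y i| := by
        simpa only [dot, abs_mul] using abs_sum_le_sum_abs (fun i => x i * y i) univ
    _ ≤ ∑ i, linf x * |y i| := by gcongr; exact habs _
    _ = linf x * l1 y := by rw [l1, mul_sum]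

end Norms

section ConeCondition

variable {p n k : ℕ} {ρ : ℝ → ℝ} {lam L mu R a1 a2 t1 t2 e : ℝ}
  {Ln : (Fin p → ℝ) → ℝ} {gradLn : (Fin p → ℝ) → (Fin p → ℝ)}

theorem rhoVec_nonneg (hA1 : Assumption1 ρ lam L mu) (x : Fin p → ℝ) : 0 ≤ rhoVec ρ x :=
  sum_nonneg fun _ _ => hA1.nonneg _

theorem rhoVec_le (hA1 : Assumption1 ρ lam L mu) (x : Fin p → ℝ) :
    rhoVec ρ x ≤ lam * L * l1 x := by
  rw [rhoVec, l1, mul_sum]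
  exact sum_le_sum fun i _ => hA1.le_mul_abs (x i)

theorem rhoVec_sub_le_of_support (hA1 : Assumption1 ρ lam L mu) (hmu : 0 ≤ mu)
    {A : Finset (Fin p)} {x : Fin p → ℝ} (hx : ∀ i ∉ A, x i = 0) (w : Fin p → ℝ) :
    rhoVec ρ x - rhoVec ρ w ≤
      lam * L * (∑ i ∈ A, |(w - x) i| - ∑ i ∈ Aᶜ, |(w - x) i|) + mu / 2 * l2 (w - x) ^ 2 := by
  have hon (i : Fin p) (_ : i ∈ A) :
      ρ (x i) - ρ (w i) ≤ lam * L * |(w - x) i| + mu / 2 * (w - x) i ^ 2 := by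
    have hsub := hA1.sub_le_mul_abs_sub (x i) (w i)
    rw [abs_sub_comm] at hsub
    have hsq : 0 ≤ mu / 2 * (w - x) i ^ 2 := by positivity
    simp only [Pi.sub_apply] at hsq ⊢
    linarith
  have hoff (i : Fin p) (hi : i ∈ Aᶜ) :
      ρ (x i) - ρ (w i) ≤ -(lam * L * |(w - x) i|) + mu / 2 * (w - x) i ^ 2 := by
    have hlow := hA1.mul_abs_sub_le (w i)
    simp only [Pi.sub_apply, hx i (mem_compl.mp hi), hA1.zero, sub_zero]
    linarith
  calc rhoVec ρ x - rhoVec ρ w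
      = ∑ i ∈ A, (ρ (x i) - ρ (w i)) + ∑ i ∈ Aᶜ, (ρ (x i) - ρ (w i)) := by
        rw [sum_add_sum_compl, rhoVec, rhoVec, sum_sub_distrib]
    _ ≤ ∑ i ∈ A, (lam * L * |(w - x) i| + mu / 2 * (w - x) i ^ 2)
        + ∑ i ∈ Aᶜ, (-(lam * L * |(w - x) i|) + mu / 2 * (w - x) i ^ 2) :=
        add_le_add (sum_le_sum hon) (sum_le_sum hoff)
    _ = _ := by
        simp only [sum_add_distrib, sum_neg_distrib, ← mul_sum]
        rw [l2_sq, ← sum_add_sum_compl A]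
        ring

theorem taylorErr_le_of_phiObj_le {c : ℝ} {w x : Fin p → ℝ} (hgrad : 8 * linf (gradLn x) ≤ c)
    (hw : phiObj Ln ρ w ≤ phiObj Ln ρ x + e) :
    taylorErr Ln gradLn w x ≤ rhoVec ρ x - rhoVec ρ w + c / 8 * l1 (w - x) + e := by
  have hdot := (neg_abs_le _).trans' (neg_le_neg (abs_dot_le (gradLn x) (w - x)))
  have hlinf : linf (gradLn x) * l1 (w - x) ≤ c / 8 * l1 (w - x) :=
    mul_le_mul_of_nonneg_right (by linarith) (l1_nonneg _)
  rw [phiObj, phiObj] at hw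
  rw [taylorErr]
  linarith

variable {w bstar : Fin p → ℝ}

theorem l1_sub_le_of_l2_sub_le_three (hA1 : Assumption1 ρ lam L mu) (hmu : 0 ≤ mu)
    (hlamL : 0 < lam * L) (hRSC2 : RSC2 n Ln gradLn R a1 a2 t1 t2) (ht1 : 0 ≤ t1)
    (hmua1 : mu / 2 ≤ a1) (hgrad : 8 * linf (gradLn bstar) ≤ lam * L)
    (hlamt1 : 16 * R * t1 * (Real.log p / n) ≤ lam * L)
    (hbstar : l2 bstar ≤ 3) (hbstarR : l1 bstar ≤ R) (hsparse : l0 bstar ≤ k)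
    (hwR : l1 w ≤ R) (hw : phiObj Ln ρ w ≤ phiObj Ln ρ bstar + e)
    (hnear : l2 (w - bstar) ≤ 3) :
    l1 (w - bstar) ≤ 8 / 3 * √k * l2 (w - bstar) + 4 / 3 * (e / (lam * L)) := by
  set A := univ.filter fun i => bstar i ≠ 0
  have hreg := rhoVec_sub_le_of_support hA1 hmu (A := A) (fun i hi => by simpa [A] using hi) w
  set S := ∑ i ∈ A, |(w - bstar) i|
  have hsplit : l1 (w - bstar) = S + ∑ i ∈ Aᶜ, |(w - bstar) i| := (sum_add_sum_compl A _).symm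
  have hS : S ≤ √k * l2 (w - bstar) := (sum_abs_le_sqrt_card_mul_l2 A _).trans <| by
    gcongr
    · exact l2_nonneg _
    · exact hsparse
  have hup := taylorErr_le_of_phiObj_le hgrad hw
  have hlow := (hRSC2 bstar hbstar hbstarR w hwR).1 hnear
  have htol : t1 * (Real.log p / n) * l1 (w - bstar) ^ 2 ≤ lam * L / 8 * l1 (w - bstar) := by
    have hlog : 0 ≤ Real.log p / n := div_nonneg (Real.log_natCast_nonneg p) n.cast_nonneg
    have hl1 : l1 (w - bstar) ≤ 2 * R := (l1_sub_le w bstar).trans (by linarith)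
    have hcoef : t1 * (Real.log p / n) * l1 (w - bstar) ≤ lam * L / 8 := by
      linarith [mul_le_mul_of_nonneg_left hl1 (mul_nonneg ht1 hlog)]
    linarith [mul_le_mul_of_nonneg_right hcoef (l1_nonneg (w - bstar))]
  have hcurv : mu / 2 * l2 (w - bstar) ^ 2 ≤ a1 * l2 (w - bstar) ^ 2 := by gcongr
  have hkey : lam * L * l1 (w - bstar) ≤ lam * L * (8 / 3 * S) + 4 / 3 * e := by
    linarith [congrArg (lam * L * ·) hsplit]
  have he : lam * L * (4 / 3 * (e / (lam * L))) = 4 / 3 * e := by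
    rw [mul_left_comm, mul_div_cancel₀ e hlamL.ne']
  calc l1 (w - bstar) ≤ 8 / 3 * S + 4 / 3 * (e / (lam * L)) :=
        le_of_mul_le_mul_left (by linarith) hlamL
    _ ≤ 8 / 3 * √k * l2 (w - bstar) + 4 / 3 * (e / (lam * L)) := by linarith

theorem radius_lt_of_three_le_l2_sub (hA1 : Assumption1 ρ lam L mu) (hlamL : 0 < lam * L)
    (hRSC2 : RSC2 n Ln gradLn R a1 a2 t1 t2) (ha2 : 0 < a2) (ht2 : 0 ≤ t2)
    (hgrad : 8 * linf (gradLn bstar) ≤ lam * L)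
    (hlamt2 : 2 * R / a2 * (3 * lam * L / 8 + t2 * √(Real.log p / n)) < 3)
    (hbstar : l2 bstar ≤ 3) (hbstarR : l1 bstar ≤ R)
    (hwR : l1 w ≤ R) (hw : phiObj Ln ρ w ≤ phiObj Ln ρ bstar + e)
    (hfar : 3 ≤ l2 (w - bstar)) :
    R < 2 * l1 bstar + 2 * (e / (lam * L)) := by
  have hl1 : l1 (w - bstar) ≤ 2 * R := (l1_sub_le w bstar).trans (by linarith)
  have hup := taylorErr_le_of_phiObj_le hgrad hw
  have hlow := (hRSC2 bstar hbstar hbstarR w hwR).2 hfar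
  have hreg : rhoVec ρ bstar - rhoVec ρ w ≤ lam * L * l1 bstar := by
    linarith [rhoVec_le hA1 bstar, rhoVec_nonneg hA1 w]
  have htol : t2 * √(Real.log p / n) * l1 (w - bstar) ≤ t2 * √(Real.log p / n) * (2 * R) :=
    mul_le_mul_of_nonneg_left hl1 (mul_nonneg ht2 (Real.sqrt_nonneg _))
  have hgrad_l1 : lam * L / 8 * l1 (w - bstar) ≤ lam * L / 8 * (2 * R) :=
    mul_le_mul_of_nonneg_left hl1 (by positivity)
  have hlamt2' : 2 * R * (3 * lam * L / 8 + t2 * √(Real.log p / n)) < 3 * a2 := by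
    rwa [div_mul_eq_mul_div, div_lt_iff₀ ha2] at hlamt2
  have hfar' : a2 * 3 ≤ a2 * l2 (w - bstar) := mul_le_mul_of_nonneg_left hfar ha2.le
  have hkey : lam * L * R < lam * L * (2 * l1 bstar) + 2 * e := by linarith
  have he : lam * L * (2 * (e / (lam * L))) = 2 * e := by
    rw [mul_left_comm, mul_div_cancel₀ e hlamL.ne']
  exact lt_of_mul_lt_mul_left (by linarith) hlamL.le

theorem l1_sub_le_of_near_or_far {x y z : Fin p → ℝ} {c : ℝ} (hc : 0 ≤ c) (he : 0 ≤ e)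
    (hx : l1 x ≤ R) (hy : l1 y ≤ R)
    (hx_near : l2 (x - z) ≤ 3 → l1 (x - z) ≤ 8 / 3 * c * l2 (x - z) + 4 / 3 * e)
    (hx_far : 3 ≤ l2 (x - z) → R < 2 * c + 2 * e)
    (hy_near : l2 (y - z) ≤ 3 → l1 (y - z) ≤ 8 / 3 * c * l2 (y - z))
    (hy_far : 3 ≤ l2 (y - z) → R < 2 * c) :
    l1 (x - y) ≤ 8 * c * l2 (x - y) + 16 * c * l2 (y - z) + 2 * min (2 * e) R := by
  have hxy : l1 (x - y) ≤ 2 * R := (l1_sub_le x y).trans (by linarith)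
  have htri1 : l1 (x - y) ≤ l1 (x - z) + l1 (y - z) := by
    simpa only [sub_sub_sub_cancel_right] using l1_sub_le (x - z) (y - z)
  have htri2 : c * l2 (x - z) ≤ c * (l2 (x - y) + l2 (y - z)) := by
    gcongr
    simpa only [sub_add_sub_cancel] using l2_add_le (x - y) (y - z)
  have hcxy := mul_nonneg hc (l2_nonneg (x - y))
  have hcyz := mul_nonneg hc (l2_nonneg (y - z))
  have hbound : l1 (x - y) ≤ 8 * c * l2 (x - y) + 16 * c * l2 (y - z) + 2 * (2 * e) := by
    rcases le_or_gt (l2 (y - z)) 3 with hy3 | hy3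
    · rcases le_or_gt (l2 (x - z)) 3 with hx3 | hx3
      · linarith [hx_near hx3, hy_near hy3]
      · linarith [hx_far hx3.le, mul_le_mul_of_nonneg_left hx3.le hc]
    · linarith [hy_far hy3.le, mul_le_mul_of_nonneg_left hy3.le hc]
  rcases min_choice (2 * e) R with h | h <;> rw [h]
  · exact hbound
  · linarith

end ConeCondition

theorem approximate_cone_condition_general
    {p n k : ℕ}
    (ρ : ℝ → ℝ) (lam L mu : ℝ) (hlam : 0 < lam) (hL : 0 < L) (hmu : 0 ≤ mu)
    (hA1 : Assumption1 ρ lam L mu)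
    (Ln : (Fin p → ℝ) → ℝ) (gradLn : (Fin p → ℝ) → (Fin p → ℝ))
    (R : ℝ)
    (a1 a2 t1 t2 : ℝ)
    (ha2 : 0 < a2) (ht1 : 0 ≤ t1) (ht2 : 0 ≤ t2)
    (hRSC2 : RSC2 n Ln gradLn R a1 a2 t1 t2)
    (α : ℝ) (hα : α = min a1 a2)
    (hfeas : ∀ β : Fin p → ℝ, gside ρ lam mu β ≤ R → l1 β ≤ R)
    (bstar : Fin p → ℝ) (hbstar_feas : gside ρ lam mu bstar ≤ R)
    (hbstar_ball : l2 bstar ≤ 1) (hsparse : l0 bstar ≤ k)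
    (hmuα : mu < 2 * α)
    (hlam1 : 8 * linf (gradLn bstar) ≤ lam * L)
    (hlam2 : 16 * R * t1 * (Real.log p / n) ≤ lam * L)
    (hlam4 : (2 * R / a2) * (3 * lam * L / 8 + t2 * Real.sqrt (Real.log p / n)) < 3)
    (bhat : Fin p → ℝ) (hbhat_feas : gside ρ lam mu bhat ≤ R)
    (hbhat_min : ∀ β : Fin p → ℝ, gside ρ lam mu β ≤ R → phiObj Ln ρ bhat ≤ phiObj Ln ρ β)
    (ηbar : ℝ) (hηbar : 0 ≤ ηbar)
    (β : Fin p → ℝ) (hβ_feas : gside ρ lam mu β ≤ R)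
    (hβ_obj : phiObj Ln ρ β ≤ phiObj Ln ρ bhat + ηbar) :
    l1 (β - bhat) ≤ 8 * Real.sqrt k * l2 (β - bhat) +
      16 * Real.sqrt k * l2 (bhat - bstar) + 2 * min (2 * ηbar / (lam * L)) R := by
  have hlamL : 0 < lam * L := mul_pos hlam hL
  have hmua1 : mu / 2 ≤ a1 := by linarith [hα ▸ min_le_left a1 a2]
  have hbstar3 : l2 bstar ≤ 3 := by linarith
  have hbstarR := hfeas bstar hbstar_feas
  have hbstar_l1 : l1 bstar ≤ √k := (l1_le_sqrt_mul_l2 hsparse).trans <| by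
    simpa using mul_le_mul_of_nonneg_left hbstar_ball (Real.sqrt_nonneg k)
  have hbhat_obj_star : phiObj Ln ρ bhat ≤ phiObj Ln ρ bstar + 0 := by
    simpa using hbhat_min bstar hbstar_feas
  have hβ_obj_star : phiObj Ln ρ β ≤ phiObj Ln ρ bstar + ηbar := by
    linarith [hbhat_min bstar hbstar_feas]
  have near {w : Fin p → ℝ} {e : ℝ} (hw : gside ρ lam mu w ≤ R) :=
    l1_sub_le_of_l2_sub_le_three (e := e) hA1 hmu hlamL hRSC2 ht1 hmua1 hlam1 hlam2 hbstar3
      hbstarR hsparse (hfeas w hw)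
  have far {w : Fin p → ℝ} {e : ℝ} (hw : gside ρ lam mu w ≤ R)
      (hobj : phiObj Ln ρ w ≤ phiObj Ln ρ bstar + e) (hfar : 3 ≤ l2 (w - bstar)) :
      R < 2 * √k + 2 * (e / (lam * L)) :=
    (radius_lt_of_three_le_l2_sub hA1 hlamL hRSC2 ha2 ht2 hlam1 hlam4 hbstar3 hbstarR
      (hfeas w hw) hobj hfar).trans_le (by linarith)
  rw [mul_div_assoc]
  exact l1_sub_le_of_near_or_far (Real.sqrt_nonneg k) (div_nonneg hηbar hlamL.le)
    (hfeas β hβ_feas) (hfeas bhat hbhat_feas) (near hβ_feas hβ_obj_star) (far hβ_feas hβ_obj_star)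
    (by simpa using near hbhat_feas hbhat_obj_star) (by simpa using far hbhat_feas hbhat_obj_star)

theorem approximate_cone_condition
    {p n k : ℕ} (hp : 2 ≤ p) (hn : 1 ≤ n) (hk : 1 ≤ k)
    (ρ : ℝ → ℝ) (lam L mu : ℝ) (hlam : 0 < lam) (hL : 0 < L) (hmu : 0 ≤ mu)
    (hA1 : Assumption1 ρ lam L mu)
    (Ln : (Fin p → ℝ) → ℝ) (gradLn : (Fin p → ℝ) → (Fin p → ℝ))
    (hdiff : ∀ β : Fin p → ℝ, HasFDerivAt Ln
      (∑ i, gradLn β i • (ContinuousLinearMap.proj i : (Fin p → ℝ) →L[ℝ] ℝ)) β)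
    (R : ℝ) (hR : 0 < R)
    (a1 a2 t1 t2 : ℝ)
    (ha1 : 0 < a1) (ha2 : 0 < a2) (ht1 : 0 ≤ t1) (ht2 : 0 ≤ t2)
    (hRSC2 : RSC2 n Ln gradLn R a1 a2 t1 t2)
    (α : ℝ) (hα : α = min a1 a2)
    (hgconv : ConvexOn ℝ Set.univ (gside ρ lam mu (p := p)))
    (hfeas : ∀ β : Fin p → ℝ, gside ρ lam mu β ≤ R → l1 β ≤ R)
    (bstar : Fin p → ℝ) (hbstar_feas : gside ρ lam mu bstar ≤ R)
    (hbstar_ball : l2 bstar ≤ 1) (hsparse : l0 bstar ≤ k)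
    (hmuα : mu < 2 * α)
    (hlam1 : 8 * linf (gradLn bstar) ≤ lam * L)
    (hlam2 : 16 * R * t1 * (Real.log p / n) ≤ lam * L)
    (hlam3 : 4 * t2 * Real.sqrt (Real.log p / n) ≤ lam * L)
    (hlam4 : (2 * R / a2) * (3 * lam * L / 8 + t2 * Real.sqrt (Real.log p / n)) < 3)
    (bhat : Fin p → ℝ) (hbhat_feas : gside ρ lam mu bhat ≤ R)
    (hbhat_min : ∀ β : Fin p → ℝ, gside ρ lam mu β ≤ R → phiObj Ln ρ bhat ≤ phiObj Ln ρ β)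
    (ηbar : ℝ) (hηbar : 0 ≤ ηbar)
    (β : Fin p → ℝ) (hβ_feas : gside ρ lam mu β ≤ R)
    (hβ_obj : phiObj Ln ρ β ≤ phiObj Ln ρ bhat + ηbar) :
    l1 (β - bhat) ≤ 8 * Real.sqrt k * l2 (β - bhat) +
      16 * Real.sqrt k * l2 (bhat - bstar) + 2 * min (2 * ηbar / (lam * L)) R :=
  approximate_cone_condition_general ρ lam L mu hlam hL hmu hA1 Ln gradLn R a1 a2 t1 t2 ha2 ht1 ht2
    hRSC2 α hα hfeas bstar hbstar_feas hbstar_ball hsparse hmuα hlam1 hlam2 hlam4 bhat hbhat_feas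
    hbhat_min ηbar hηbar β hβ_feas hβ_obj
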